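/- For parameters h > 0, b > 0, u, v ∈ ℝ, the matrix R of the 1-D TRSW system satisfies A · R = R · Λ where Λ = diag(v − √(bh), v, v, v + √(bh)). -/

import Mathlib

/-!
The columns of the unscaled matrix `b • R` are eigenvectors of `A` for the eigenvalues
`v - s, v, v, v + s` as soon as `s ^ 2 = b * h`, which is a polynomial identity check. The
factor `1 / b` commutes with both products, and `√(b * h)` is such an `s` because `b * h ≥ 0`.
-/

noncomputable def trswA (h u v b : ℝ) : Matrix (Fin 4) (Fin 4) ℝ :=
  !![0, 0, 1, 0;
     -(u * v), v, u, 0;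
     b * h / 2 - v ^ 2, 0, 2 * v, h / 2;
     -(b * v), 0, b, v]

noncomputable def trswR (h u v b : ℝ) : Matrix (Fin 4) (Fin 4) ℝ :=
  (1 / b) •
  !![1, -1, 0, 1;
     u, 0, b, u;
     v - Real.sqrt (b * h), -v, 0, v + Real.sqrt (b * h);
     b, b, 0, b]

theorem trswA_mul_eigenvectors (h u v b s : ℝ) (hs : s ^ 2 = b * h) :
    trswA h u v b * !![1, -1, 0, 1; u, 0, b, u; v - s, -v, 0, v + s; b, b, 0, b] =
      !![1, -1, 0, 1; u, 0, b, u; v - s, -v, 0, v + s; b, b, 0, b] *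
        Matrix.diagonal ![v - s, v, v, v + s] := by
  rw [trswA]
  ext i j
  fin_cases i <;> fin_cases j <;> simp [Matrix.mul_apply, Fin.sum_univ_succ] <;> linarith

theorem trswA_diag (h u v b : ℝ) (hh : 0 < h) (hb : 0 < b) :
    trswA h u v b * trswR h u v b =
      trswR h u v b *
        Matrix.diagonal ![v - Real.sqrt (b * h), v, v, v + Real.sqrt (b * h)] := by
  rw [trswR, Matrix.mul_smul, Matrix.smul_mul,
    trswA_mul_eigenvectors h u v b _ (Real.sq_sqrt (mul_pos hb hh).le)]
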